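/- There is no connected chordal graph with at least two vertices which is α-stable. -/
import Mathlib


open Finset

variable {V : Type*}

/-- A stable (independent) set of vertices of `G`. -/
def IsStableSet (G : SimpleGraph V) (S : Finset V) : Prop :=
  ∀ u ∈ S, ∀ v ∈ S, ¬ G.Adj u v

/-- The stability number `α(G)`: the maximum cardinality of a stable set. -/
noncomputable def stabNum (G : SimpleGraph V) [Fintype V] : ℕ :=
  sSup {n : ℕ | ∃ S : Finset V, IsStableSet G S ∧ S.card = n}

/-- A stability system of `G`: a stable set of maximum cardinality. -/
def IsStabSystem (G : SimpleGraph V) [Fintype V] (S : Finset V) : Prop :=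
  IsStableSet G S ∧ S.card = stabNum G

/-- `G` is α⁻-stable: deleting any edge leaves the stability number unchanged. -/
def AlphaMinusStable (G : SimpleGraph V) [Fintype V] : Prop :=
  ∀ u v : V, G.Adj u v → stabNum (G.deleteEdges {s(u, v)}) = stabNum G

/-- `G` is α⁺-stable: adding any edge of the complement leaves the stability
number unchanged. -/
def AlphaPlusStable (G : SimpleGraph V) [Fintype V] : Prop :=
  ∀ u v : V, u ≠ v → ¬ G.Adj u v →
    stabNum (G ⊔ SimpleGraph.fromEdgeSet {s(u, v)}) = stabNum G

/-- A matching of `G`, viewed as a set of pairwise non-incident edges. -/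
def IsMatchingSet (G : SimpleGraph V) (M : Finset (Sym2 V)) : Prop :=
  (↑M : Set (Sym2 V)) ⊆ G.edgeSet ∧
    ∀ e ∈ M, ∀ f ∈ M, e ≠ f → ∀ v : V, ¬ (v ∈ e ∧ v ∈ f)

/-- The matching number `μ(G)`. -/
noncomputable def matchNum (G : SimpleGraph V) [Fintype V] : ℕ :=
  sSup {n : ℕ | ∃ M : Finset (Sym2 V), IsMatchingSet G M ∧ M.card = n}

/-- A maximum matching of `G`. -/
def IsMaximumMatching (G : SimpleGraph V) [Fintype V] (M : Finset (Sym2 V)) : Prop :=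
  IsMatchingSet G M ∧ M.card = matchNum G

/-- A perfect matching of `G`: a matching covering every vertex. -/
def IsPerfectMatchingSet (G : SimpleGraph V) (M : Finset (Sym2 V)) : Prop :=
  IsMatchingSet G M ∧ ∀ v : V, ∃ e ∈ M, v ∈ e

/-- A pendant vertex: a vertex of degree one. -/
def IsPendant (G : SimpleGraph V) (v : V) : Prop :=
  (G.neighborSet v).ncard = 1

/-- A set `D` is 2-dominating: every vertex outside `D` has at least two
neighbors in `D`. -/
def Is2Dominating (G : SimpleGraph V) (D : Finset V) : Prop :=
  ∀ v : V, v ∉ D → 2 ≤ ({u : V | u ∈ D ∧ G.Adj v u}).ncard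

/-- A chordal graph: no induced cycle on four or more vertices. -/
def IsChordal (G : SimpleGraph V) : Prop :=
  ∀ n : ℕ, 4 ≤ n → IsEmpty (SimpleGraph.cycleGraph n ↪g G)

/-- A bipartite graph: the vertex set is partitioned into two stable sets. -/
def IsBipartiteGr (G : SimpleGraph V) [Fintype V] [DecidableEq V] : Prop :=
  ∃ C : Finset V, IsStableSet G C ∧ IsStableSet G Cᶜ

/-- A strong unique independence graph: a graph with a unique stability system
whose complement is also stable. -/
def IsStrongUniqueIndep (G : SimpleGraph V) [Fintype V] [DecidableEq V] : Prop :=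
  ∃ S : Finset V, IsStabSystem G S ∧ (∀ S' : Finset V, IsStabSystem G S' → S' = S) ∧
    IsStableSet G Sᶜ

/-- A bistable bipartite graph: its two color classes are its only two
stability systems. -/
def IsBistable (G : SimpleGraph V) [Fintype V] [DecidableEq V] : Prop :=
  ∃ A : Finset V, IsStableSet G A ∧ IsStableSet G Aᶜ ∧
    IsStabSystem G A ∧ IsStabSystem G Aᶜ ∧ A ≠ Aᶜ ∧
    ∀ S : Finset V, IsStabSystem G S → S = A ∨ S = Aᶜ

/-- A vertex cover of `G`. -/
def IsVertexCover (G : SimpleGraph V) (C : Finset V) : Prop :=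
  ∀ u v : V, G.Adj u v → u ∈ C ∨ v ∈ C

/-- A minimum vertex cover of `G`. -/
def IsMinVertexCover (G : SimpleGraph V) [Fintype V] (C : Finset V) : Prop :=
  IsVertexCover G C ∧ ∀ C' : Finset V, IsVertexCover G C' → C.card ≤ C'.card



namespace S17
variable {V : Type*} (G : SimpleGraph V)

/-- A walk presented as a function on indices. -/
def IsWalkF (f : ℕ → V) (m : ℕ) : Prop := ∀ i, i < m → G.Adj (f i) (f (i+1))

/-- Connectivity within `s`, avoiding `S`. -/
def Conn (s S : Set V) (x y : V) : Prop :=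
  ∃ f m, IsWalkF G f m ∧ f 0 = x ∧ f m = y ∧ ∀ i ≤ m, f i ∈ s ∧ f i ∉ S

variable {G} {s S : Set V} {x y z w : V}

lemma Conn.refl (hx : x ∈ s) (hxS : x ∉ S) : Conn G s S x x :=
  ⟨fun _ => x, 0, fun i hi => absurd hi (Nat.not_lt_zero i), rfl, rfl,
    fun _ _ => ⟨hx, hxS⟩⟩

lemma Conn.mem_left (h : Conn G s S x y) : x ∈ s ∧ x ∉ S := by
  obtain ⟨f, m, hw, h0, hm, hmem⟩ := h
  simpa [h0] using hmem 0 (Nat.zero_le m)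

lemma Conn.mem_right (h : Conn G s S x y) : y ∈ s ∧ y ∉ S := by
  obtain ⟨f, m, hw, h0, hm, hmem⟩ := h
  simpa [hm] using hmem m le_rfl

lemma Conn.symm (h : Conn G s S x y) : Conn G s S y x := by
  obtain ⟨f, m, hw, h0, hm, hmem⟩ := h
  refine ⟨fun i => f (m - i), m, ?_, by simp [hm], by simp [h0], ?_⟩
  · intro i hi
    have h1 : m - i = (m - (i+1)) + 1 := by omega
    show G.Adj (f (m - i)) (f (m - (i+1)))
    rw [h1]
    exact (hw (m - (i+1)) (by omega)).symm
  · intro i hi; exact hmem (m - i) (by omega)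

lemma Conn.trans (h1 : Conn G s S x y) (h2 : Conn G s S y z) : Conn G s S x z := by
  obtain ⟨f, m, hw, hf0, hfm, hfmem⟩ := h1
  obtain ⟨g, l, hg, hg0, hgl, hgmem⟩ := h2
  refine ⟨fun i => if i < m then f i else g (i - m), m + l, ?_, ?_, ?_, ?_⟩
  · intro i hi
    by_cases h : i < m
    · by_cases h' : i + 1 < m
      · simpa [h, h'] using hw i h
      · have he : i + 1 = m := by omega
        show G.Adj (if i < m then f i else g (i-m)) (if i+1 < m then f (i+1) else g (i+1-m))
        rw [if_pos h, if_neg (by omega : ¬ i + 1 < m), show i + 1 - m = 0 by omega, hg0,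
          ← hfm, ← he]
        exact hw i h
    · have hi' : i - m < l := by omega
      show G.Adj (if i < m then f i else g (i-m)) (if i+1 < m then f (i+1) else g (i+1-m))
      rw [if_neg h, if_neg (by omega : ¬ i + 1 < m), show i + 1 - m = (i - m) + 1 by omega]
      exact hg (i - m) hi'
  · by_cases h : 0 < m
    · simp [h, hf0]
    · have : m = 0 := by omega
      simp [this, hg0, ← hfm, this, ← hf0]
  · simp only [if_neg (by omega : ¬ m + l < m)]
    rw [show m + l - m = l by omega]; exact hgl
  · intro i hi
    by_cases h : i < m
    · simp only [if_pos h]; exact hfmem i (by omega)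
    · simp only [if_neg h]; exact hgmem (i - m) (by omega)

/-- Every vertex on a `Conn` witness is itself connected to the start. -/
lemma Conn.prefix (h : Conn G s S x y) :
    ∀ (f : ℕ → V) (m : ℕ), IsWalkF G f m → f 0 = x → (∀ i ≤ m, f i ∈ s ∧ f i ∉ S) →
      ∀ j ≤ m, Conn G s S x (f j) := by
  intro f m hw h0 hmem j hj
  exact ⟨f, j, fun i hi => hw i (by omega), h0, rfl, fun i hi => hmem i (by omega)⟩

lemma Conn.step (h : Conn G s S x y) (ha : G.Adj y w) (hws : w ∈ s) (hwS : w ∉ S) :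
    Conn G s S x w := by
  refine h.trans ⟨fun i => if i = 0 then y else w, 1, ?_, by simp, by simp, ?_⟩
  · intro i hi
    have : i = 0 := by omega
    simpa [this] using ha
  · intro i hi
    by_cases hh : i = 0
    · subst hh; simpa using h.mem_right
    · simp [hh, hws, hwS]

/-- `S` separates `a` from `b` within `s`. -/
def SepSet (G : SimpleGraph V) (s : Set V) (a b : V) (S : Set V) : Prop :=
  S ⊆ s ∧ a ∉ S ∧ b ∉ S ∧
    ∀ f m, IsWalkF G f m → f 0 = a → f m = b → (∀ i ≤ m, f i ∈ s) → ∃ i ≤ m, f i ∈ S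

variable {a b : V}

lemma sepSet_symm (h : SepSet G s a b S) : SepSet G s b a S := by
  obtain ⟨h1, h2, h3, h4⟩ := h
  refine ⟨h1, h3, h2, ?_⟩
  intro f m hw h0 hm hmem
  obtain ⟨i, hi, hiS⟩ := h4 (fun i => f (m - i)) m
    (fun i hi => by
      have h1' : m - i = (m - (i+1)) + 1 := by omega
      show G.Adj (f (m - i)) (f (m - (i+1)))
      rw [h1']
      exact (hw (m - (i+1)) (by omega)).symm)
    (by simp [hm]) (by simp [h0]) (fun i hi => hmem (m - i) (by omega))
  exact ⟨m - i, by omega, hiS⟩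

lemma sepSet_exists (ha : a ∈ s) (hb : b ∈ s) (hab : a ≠ b) (hnadj : ¬ G.Adj a b) :
    SepSet G s a b (s \ {a, b}) := by
  refine ⟨Set.diff_subset, by simp, by simp, ?_⟩
  intro f m hw h0 hm hmem
  have hm1 : 1 ≤ m := by
    rcases Nat.eq_zero_or_pos m with h | h
    · exact absurd (h0.symm.trans (h ▸ hm)) hab
    · exact h
  refine ⟨1, hm1, hmem 1 hm1, fun h => ?_⟩
  have hadj := hw 0 hm1
  rw [h0] at hadj
  rcases h with h | h
  · rw [h] at hadj; exact G.irrefl hadj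
  · rw [Set.mem_singleton_iff.mp h] at hadj; exact hnadj hadj

/-- Existence of a minimum-cardinality separator. -/
lemma exists_min_sep [Fintype V] (ha : a ∈ s) (hb : b ∈ s) (hab : a ≠ b)
    (hnadj : ¬ G.Adj a b) :
    ∃ S : Set V, SepSet G s a b S ∧ ∀ T : Set V, SepSet G s a b T → S.ncard ≤ T.ncard := by
  classical
  set P : ℕ → Prop := fun n => ∃ S : Set V, SepSet G s a b S ∧ S.ncard = n with hP
  have hex : ∃ n, P n := ⟨(s \ {a, b}).ncard, s \ {a, b}, sepSet_exists ha hb hab hnadj, rfl⟩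
  obtain ⟨S, hS, hcard⟩ := Nat.find_spec hex
  exact ⟨S, hS, fun T hT => by
    have := Nat.find_min' hex (m := T.ncard) ⟨T, hT, rfl⟩
    omega⟩

/-- The set of vertices reachable from `a` within `s` avoiding `S`. -/
def Comp (G : SimpleGraph V) (s S : Set V) (a : V) : Set V := {x | Conn G s S a x}

lemma mem_comp_self (ha : a ∈ s) (haS : a ∉ S) : a ∈ Comp G s S a := Conn.refl ha haS

lemma comp_mem_s (hx : x ∈ Comp G s S a) : x ∈ s ∧ x ∉ S := Conn.mem_right hx

lemma comp_absorb (hx : x ∈ Comp G s S a) (hadj : G.Adj x w) (hws : w ∈ s) (hwS : w ∉ S) :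
    w ∈ Comp G s S a := Conn.step hx hadj hws hwS

lemma comp_disjoint (hSep : SepSet G s a b S) (hx : x ∈ Comp G s S a)
    (hx' : x ∈ Comp G s S b) : False := by
  obtain ⟨f, m, hw, h0, hm, hmem⟩ := (Conn.trans hx (Conn.symm hx') : Conn G s S a b)
  obtain ⟨i, him, hiS⟩ := hSep.2.2.2 f m hw h0 hm (fun i hi => (hmem i hi).1)
  exact (hmem i him).2 hiS

lemma comp_nonadj (hSep : SepSet G s a b S) (hx : x ∈ Comp G s S a)
    (hy : y ∈ Comp G s S b) : ¬ G.Adj x y := by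
  intro hadj
  have hy' := comp_mem_s hy
  exact comp_disjoint hSep (comp_absorb hx hadj hy'.1 hy'.2) hy

/-- Every vertex of a minimum separator has a neighbour in the `a`-side component. -/
lemma sep_min_neighbor [Fintype V] (hSep : SepSet G s a b S)
    (hmin : ∀ T : Set V, SepSet G s a b T → S.ncard ≤ T.ncard) {t : V} (ht : t ∈ S) :
    ∃ x ∈ Comp G s S a, G.Adj t x := by
  classical
  have hlt : (S \ {t}).ncard < S.ncard :=
    Set.ncard_lt_ncard (by
      constructor
      · exact Set.diff_subset
      · intro hsub
        exact (hsub ht).2 rfl) S.toFinite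
  have hnot : ¬ SepSet G s a b (S \ {t}) := fun hT => by
    have := hmin _ hT; omega
  have h4 : ¬ ∀ f m, IsWalkF G f m → f 0 = a → f m = b → (∀ i ≤ m, f i ∈ s) →
      ∃ i ≤ m, f i ∈ S \ {t} := fun h =>
    hnot ⟨Set.Subset.trans Set.diff_subset hSep.1,
      fun hc => hSep.2.1 hc.1, fun hc => hSep.2.2.1 hc.1, h⟩
  push_neg at h4
  obtain ⟨f, m, hw, h0, hm, hmem, havoid⟩ := h4
  obtain ⟨i, him, hiS⟩ := hSep.2.2.2 f m hw h0 hm hmem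
  have hq : ∃ j, j ≤ m ∧ f j ∈ S := ⟨i, him, hiS⟩
  set i0 := Nat.find hq with hi0
  obtain ⟨hi0m, hi0S⟩ := Nat.find_spec hq
  rw [← hi0] at hi0m hi0S
  have hft : f i0 = t := by
    have := havoid i0 hi0m
    by_contra hne
    exact this ⟨hi0S, hne⟩
  have hi0pos : 0 < i0 := by
    rcases Nat.eq_zero_or_pos i0 with h | h
    · rw [h, h0] at hi0S; exact absurd hi0S hSep.2.1
    · exact h
  refine ⟨f (i0 - 1), ?_, ?_⟩
  · refine ⟨f, i0 - 1, fun j hj => hw j (by omega), h0, rfl, fun j hj => ⟨hmem j (by omega), ?_⟩⟩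
    have := Nat.find_min hq (m := j) (by omega)
    push_neg at this
    exact fun hc => absurd hc (this (by omega))
  · have := hw (i0 - 1) (by omega)
    rw [show i0 - 1 + 1 = i0 by omega, hft] at this
    exact this.symm

/-- A minimum-length walk with interior in `C` is an induced path. -/
lemma exists_min_path (C : Set V) {u v : V} (hne : u ≠ v) (hnadj : ¬ G.Adj u v)
    (huC : u ∉ C) (hvC : v ∉ C)
    (hex : ∃ m, ∃ g : ℕ → V, IsWalkF G g m ∧ g 0 = u ∧ g m = v ∧
      ∀ i, 0 < i → i < m → g i ∈ C) :
    ∃ k, ∃ f : ℕ → V, 2 ≤ k ∧ IsWalkF G f k ∧ f 0 = u ∧ f k = v ∧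
      (∀ i, 0 < i → i < k → f i ∈ C) ∧
      (∀ i j, i < j → j ≤ k → f i ≠ f j) ∧
      (∀ i j, i + 1 < j → j ≤ k → ¬ G.Adj (f i) (f j)) := by
  classical
  obtain ⟨f, hw, h0, hkv, hC⟩ := Nat.find_spec hex
  set k := Nat.find hex with hk
  have hmin : ∀ m, m < k → ¬ (∃ g : ℕ → V, IsWalkF G g m ∧ g 0 = u ∧ g m = v ∧
      ∀ i, 0 < i → i < m → g i ∈ C) := fun m hm => Nat.find_min hex (hk ▸ hm)
  have hk2 : 2 ≤ k := by
    rcases Nat.lt_or_ge k 2 with h | h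
    · exfalso
      have : k = 0 ∨ k = 1 := by omega
      rcases this with h1 | h1
      · rw [h1] at hkv; exact hne (h0 ▸ hkv ▸ rfl)
      · have := hw 0 (by omega)
        rw [h0, show (0:ℕ)+1 = k by omega, hkv] at this
        exact hnadj this
    · exact h
  have short : ∀ i d, 1 ≤ d → i + d ≤ k → G.Adj (f i) (f (i + d)) → d = 1 := by
    intro i d hd hik hadj
    by_contra hne1
    have hd2 : 2 ≤ d := by omega
    have hnotend : ¬ (i = 0 ∧ i + d = k) := by
      rintro ⟨rfl, h2⟩
      rw [h0, show (0:ℕ) + d = k from h2, hkv] at hadj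
      exact hnadj hadj
    set k' := k - (d - 1) with hk'
    refine hmin k' (by omega) ⟨fun t => if t ≤ i then f t else f (t + (d-1)), ?_, ?_, ?_, ?_⟩
    · intro t ht
      by_cases h1 : t + 1 ≤ i
      · simp only [if_pos (by omega : t ≤ i), if_pos h1]; exact hw t (by omega)
      · by_cases h2 : t ≤ i
        · have hti : t = i := by omega
          simp only [if_pos h2, if_neg h1]
          rw [hti, show i + 1 + (d-1) = i + d by omega]
          exact hadj
        · simp only [if_neg h2, if_neg (by omega : ¬ t + 1 ≤ i)]
          rw [show t + 1 + (d-1) = (t + (d-1)) + 1 by omega]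
          exact hw (t + (d-1)) (by omega)
    · simp only [if_pos (Nat.zero_le i)]; exact h0
    · have : ¬ k' ≤ i := by omega
      simp only [if_neg this]
      rw [show k' + (d-1) = k by omega]
      exact hkv
    · intro t ht1 ht2
      by_cases h2 : t ≤ i
      · simp only [if_pos h2]; exact hC t ht1 (by omega)
      · simp only [if_neg h2]; exact hC (t + (d-1)) (by omega) (by omega)
  have inj : ∀ i d, 1 ≤ d → i + d ≤ k → f i ≠ f (i + d) := by
    intro i d hd hik heq
    by_cases hi0 : i = 0
    · subst hi0
      by_cases hdk : d = k
      · rw [h0, show (0:ℕ) + d = k by omega, hkv] at heq; exact hne heq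
      · have : f (0 + d) ∈ C := hC (0 + d) (by omega) (by omega)
        rw [← heq, h0] at this; exact huC this
    · by_cases hdk : i + d = k
      · have : f i ∈ C := hC i (by omega) (by omega)
        rw [heq, hdk, hkv] at this; exact hvC this
      · set k' := k - d with hk'
        refine hmin k' (by omega) ⟨fun t => if t ≤ i then f t else f (t + d), ?_, ?_, ?_, ?_⟩
        · intro t ht
          by_cases h1 : t + 1 ≤ i
          · simp only [if_pos (by omega : t ≤ i), if_pos h1]; exact hw t (by omega)
          · by_cases h2 : t ≤ i
            · have hti : t = i := by omega
              simp only [if_pos h2, if_neg h1]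
              rw [hti, show i + 1 + d = (i + d) + 1 by omega, heq]
              exact hw (i + d) (by omega)
            · simp only [if_neg h2, if_neg (by omega : ¬ t + 1 ≤ i)]
              rw [show t + 1 + d = (t + d) + 1 by omega]
              exact hw (t + d) (by omega)
        · simp only [if_pos (Nat.zero_le i)]; exact h0
        · have : ¬ k' ≤ i := by omega
          simp only [if_neg this]
          rw [show k' + d = k by omega]
          exact hkv
        · intro t ht1 ht2
          by_cases h2 : t ≤ i
          · simp only [if_pos h2]; exact hC t ht1 (by omega)
          · simp only [if_neg h2]; exact hC (t + d) (by omega) (by omega)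
  refine ⟨k, f, hk2, hw, h0, hkv, hC, ?_, ?_⟩
  · intro i j hij hjk heq
    exact inj i (j - i) (by omega) (by omega) (by rw [show i + (j-i) = j by omega]; exact heq)
  · intro i j hij hjk hadj
    have := short i (j - i) (by omega) (by omega)
      (by rw [show i + (j-i) = j by omega]; exact hadj)
    omega

lemma fin_eq_add_one_iff {m : ℕ} (x y : Fin (m+2)) :
    x = y + 1 ↔ x.val = (y.val + 1) % (m+2) := by
  constructor
  · intro h; rw [h]; simp [Fin.val_add]
  · intro h; apply Fin.ext; rw [h]; simp [Fin.val_add]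

lemma no_cycle (hch : ∀ n : ℕ, 4 ≤ n → IsEmpty (SimpleGraph.cycleGraph n ↪g G))
    (c : ℕ → V) (n : ℕ) (hn : 4 ≤ n)
    (hadj : ∀ i, i + 1 < n → G.Adj (c i) (c (i+1)))
    (hlast : G.Adj (c (n-1)) (c 0))
    (hinj : ∀ i j, i < j → j < n → c i ≠ c j)
    (hind : ∀ i j, i + 1 < j → j < n → ¬(i = 0 ∧ j = n-1) → ¬ G.Adj (c i) (c j)) :
    False := by
  obtain ⟨m, rfl⟩ : ∃ m, n = m + 2 := ⟨n - 2, by omega⟩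
  have key : ∀ i j : ℕ, i < m + 2 → j < m + 2 →
      (G.Adj (c i) (c j) ↔ (i = (j + 1) % (m+2) ∨ j = (i + 1) % (m+2))) := by
    intro i j hi hj
    constructor
    · intro hadj'
      by_contra hcon
      push_neg at hcon
      obtain ⟨hA, hB⟩ := hcon
      rcases Nat.lt_trichotomy i j with h | h | h
      · have h1 : i + 1 < j := by
          rcases Nat.lt_or_ge (i+1) j with h' | h'
          · exact h'
          · exfalso
            have : j = i + 1 := by omega
            rw [Nat.mod_eq_of_lt (by omega)] at hB
            exact hB this
        have h2 : ¬ (i = 0 ∧ j = m + 2 - 1) := by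
          rintro ⟨rfl, rfl⟩
          rw [show (m + 2 - 1) + 1 = m + 2 by omega, Nat.mod_self] at hA
          exact hA rfl
        exact hind i j h1 hj h2 hadj'
      · rw [h] at hadj'; exact G.irrefl hadj'
      · have h1 : j + 1 < i := by
          rcases Nat.lt_or_ge (j+1) i with h' | h'
          · exact h'
          · exfalso
            have : i = j + 1 := by omega
            rw [Nat.mod_eq_of_lt (by omega)] at hA
            exact hA this
        have h2 : ¬ (j = 0 ∧ i = m + 2 - 1) := by
          rintro ⟨rfl, rfl⟩
          rw [show (m + 2 - 1) + 1 = m + 2 by omega, Nat.mod_self] at hB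
          exact hB rfl
        exact hind j i h1 hi h2 hadj'.symm
    · intro h
      rcases h with h | h
      · by_cases hc : j + 1 < m + 2
        · rw [Nat.mod_eq_of_lt hc] at h
          rw [h]
          exact (hadj j hc).symm
        · have hj1 : j + 1 = m + 2 := by omega
          rw [hj1, Nat.mod_self] at h
          rw [h, show j = m + 2 - 1 by omega]
          exact hlast.symm
      · by_cases hc : i + 1 < m + 2
        · rw [Nat.mod_eq_of_lt hc] at h
          rw [h]
          exact hadj i hc
        · have hi1 : i + 1 = m + 2 := by omega
          rw [hi1, Nat.mod_self] at h
          rw [h, show i = m + 2 - 1 by omega]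
          exact hlast
  have hFinj : Function.Injective (fun x : Fin (m+2) => c x.val) := by
    intro x y hxy
    by_contra hne
    have hne' : x.val ≠ y.val := fun h => hne (Fin.ext h)
    rcases Nat.lt_trichotomy x.val y.val with h | h | h
    · exact hinj x.val y.val h y.isLt hxy
    · exact hne' h
    · exact hinj y.val x.val h x.isLt hxy.symm
  refine (hch (m+2) hn).false ?_
  refine ⟨⟨fun x : Fin (m+2) => c x.val, hFinj⟩, ?_⟩
  intro x y
  show G.Adj (c x.val) (c y.val) ↔ _
  rw [SimpleGraph.cycleGraph_adj, key x.val y.val x.isLt y.isLt,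
    sub_eq_iff_eq_add, sub_eq_iff_eq_add, add_comm (1 : Fin (m+2)) y,
    add_comm (1 : Fin (m+2)) x, fin_eq_add_one_iff, fin_eq_add_one_iff]

lemma conn_path {x1 x2 u v : V} (hx1 : x1 ∈ Comp G s S a) (hx2 : x2 ∈ Comp G s S a)
    (h1 : G.Adj u x1) (h2 : G.Adj v x2) :
    ∃ m, ∃ h : ℕ → V, IsWalkF G h m ∧ h 0 = u ∧ h m = v ∧
      ∀ i, 0 < i → i < m → h i ∈ Comp G s S a := by
  obtain ⟨g, l, hg, hg0, hgl, hgmem⟩ := (Conn.trans (Conn.symm hx1) hx2 : Conn G s S x1 x2)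
  have hmemA : ∀ j ≤ l, g j ∈ Comp G s S a :=
    fun j hj => hx1.trans (Conn.prefix (⟨g, l, hg, hg0, hgl, hgmem⟩ : Conn G s S x1 x2)
      g l hg hg0 hgmem j hj)
  refine ⟨l + 2, fun t => if t = 0 then u else if t ≤ l + 1 then g (t-1) else v, ?_, by simp, ?_, ?_⟩
  · intro t ht
    by_cases ht0 : t = 0
    · subst ht0
      simp only [if_pos rfl, if_neg (Nat.one_ne_zero), if_pos (by omega : 1 ≤ l + 1)]
      rw [show (1:ℕ) - 1 = 0 from rfl, hg0]
      exact h1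
    · by_cases hl : t ≤ l
      · simp only [if_neg ht0, if_neg (by omega : ¬ t + 1 = 0), if_pos (by omega : t ≤ l+1),
          if_pos (by omega : t + 1 ≤ l + 1)]
        rw [show t + 1 - 1 = (t-1) + 1 by omega]
        exact hg (t-1) (by omega)
      · have htl : t = l + 1 := by omega
        subst htl
        simp only [if_neg ht0, if_pos (le_refl (l+1)), if_neg (by omega : ¬ l + 1 + 1 = 0),
          if_neg (by omega : ¬ l + 1 + 1 ≤ l + 1)]
        rw [show l + 1 - 1 = l by omega, hgl]
        exact h2.symm
  · simp only [if_neg (by omega : ¬ l + 2 = 0), if_neg (by omega : ¬ l + 2 ≤ l + 1)]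
  · intro i hi1 hi2
    simp only [if_neg (by omega : ¬ i = 0), if_pos (by omega : i ≤ l + 1)]
    exact hmemA (i-1) (by omega)

/-- A minimum separator is a clique in a chordal graph. -/
lemma sep_min_clique [Fintype V]
    (hch : ∀ n : ℕ, 4 ≤ n → IsEmpty (SimpleGraph.cycleGraph n ↪g G))
    (hSep : SepSet G s a b S)
    (hmin : ∀ T : Set V, SepSet G s a b T → S.ncard ≤ T.ncard)
    {u v : V} (hu : u ∈ S) (hv : v ∈ S) (huv : u ≠ v) : G.Adj u v := by
  by_contra hnadj
  have hSepb := sepSet_symm hSep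
  have hminb : ∀ T : Set V, SepSet G s b a T → S.ncard ≤ T.ncard :=
    fun T hT => hmin T (sepSet_symm hT)
  obtain ⟨x1, hx1A, hx1⟩ := sep_min_neighbor hSep hmin hu
  obtain ⟨x2, hx2A, hx2⟩ := sep_min_neighbor hSep hmin hv
  obtain ⟨y1, hy1B, hy1⟩ := sep_min_neighbor hSepb hminb hu
  obtain ⟨y2, hy2B, hy2⟩ := sep_min_neighbor hSepb hminb hv
  have huA : u ∉ Comp G s S a := fun h => (comp_mem_s h).2 hu
  have hvA : v ∉ Comp G s S a := fun h => (comp_mem_s h).2 hv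
  have huB : u ∉ Comp G s S b := fun h => (comp_mem_s h).2 hu
  have hvB : v ∉ Comp G s S b := fun h => (comp_mem_s h).2 hv
  obtain ⟨k, f, hk2, hwf, hf0, hfk, hfC, hfinj, hfnadj⟩ :=
    exists_min_path (Comp G s S a) huv hnadj huA hvA (conn_path hx1A hx2A hx1 hx2)
  obtain ⟨l, g, hl2, hwg, hg0, hgl, hgC, hginj, hgnadj⟩ :=
    exists_min_path (Comp G s S b) (Ne.symm huv) (fun h => hnadj h.symm) hvB huB
      (conn_path hy2B hy1B hy2 hy1)
  set n := k + l with hn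
  set c : ℕ → V := fun t => if t ≤ k then f t else g (t - k) with hc
  have hck : ∀ t, k ≤ t → c t = g (t - k) := by
    intro t ht
    by_cases h : t ≤ k
    · have ht' : t = k := by omega
      subst ht'
      simp [hc, hg0, hfk]
    · simp only [hc, if_neg h]
  have hck' : ∀ t, t ≤ k → c t = f t := fun t ht => by simp only [hc, if_pos ht]
  refine no_cycle hch c n (by omega) ?_ ?_ ?_ ?_
  · intro i hi
    by_cases h : i + 1 ≤ k
    · rw [hck' i (by omega), hck' (i+1) h]
      exact hwf i (by omega)
    · rw [hck i (by omega), hck (i+1) (by omega), show i + 1 - k = (i - k) + 1 by omega]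
      exact hwg (i - k) (by omega)
  · rw [hck (n-1) (by omega), hck' 0 (by omega), hf0, show n - 1 - k = l - 1 by omega,
      ← hgl, show l = (l - 1) + 1 by omega]
    exact hwg (l-1) (by omega)
  · intro i j hij hjn
    by_cases hjk : j ≤ k
    · rw [hck' i (by omega), hck' j hjk]
      exact hfinj i j hij hjk
    · by_cases hik : k ≤ i
      · rw [hck i hik, hck j (by omega)]
        exact hginj (i - k) (j - k) (by omega) (by omega)
      · rw [hck' i (by omega), hck j (by omega)]
        by_cases hi0 : i = 0
        · subst hi0
          rw [hf0, ← hgl]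
          exact fun h => hginj (j - k) l (by omega) le_rfl h.symm
        · intro heq
          exact comp_disjoint hSep (heq ▸ hfC i (by omega) (by omega))
            (hgC (j - k) (by omega) (by omega))
  · intro i j hij hjn hnotend
    by_cases hjk : j ≤ k
    · rw [hck' i (by omega), hck' j hjk]
      exact hfnadj i j hij hjk
    · by_cases hik : k ≤ i
      · rw [hck i hik, hck j (by omega)]
        exact hgnadj (i - k) (j - k) (by omega) (by omega)
      · rw [hck' i (by omega), hck j (by omega)]
        by_cases hi0 : i = 0
        · subst hi0
          rw [hf0, ← hgl]
          have hjn1 : j ≠ n - 1 := fun h => hnotend ⟨rfl, h⟩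
          exact fun h => hgnadj (j - k) l (by omega) le_rfl h.symm
        · exact comp_nonadj hSep (hfC i (by omega) (by omega))
            (hgC (j - k) (by omega) (by omega))

/-- Simplicial within `s`. -/
def SimpIn (G : SimpleGraph V) (s : Set V) (x : V) : Prop :=
  ∀ w ∈ s, ∀ z ∈ s, G.Adj x w → G.Adj x z → w ≠ z → G.Adj w z

lemma claim_side [Fintype V]
    (hch : ∀ n : ℕ, 4 ≤ n → IsEmpty (SimpleGraph.cycleGraph n ↪g G))
    (ha : a ∈ s) (hb : b ∈ s)
    (hSep : SepSet G s a b S)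
    (hmin : ∀ T : Set V, SepSet G s a b T → S.ncard ≤ T.ncard)
    (IH : ∀ t : Set V, t ⊆ s → b ∉ t → ∀ p q, p ∈ t → q ∈ t → p ≠ q → ¬G.Adj p q →
      ∃ x ∈ t, ∃ y ∈ t, x ≠ y ∧ ¬G.Adj x y ∧ SimpIn G t x ∧ SimpIn G t y) :
    ∃ x ∈ Comp G s S a, SimpIn G s x := by
  have haA : a ∈ Comp G s S a := mem_comp_self ha hSep.2.1
  have hs's : Comp G s S a ∪ S ⊆ s := by
    intro x hx
    rcases hx with hx | hx
    · exact (comp_mem_s hx).1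
    · exact hSep.1 hx
  have hbs' : b ∉ Comp G s S a ∪ S := by
    intro hx
    rcases hx with hx | hx
    · exact comp_disjoint hSep hx (mem_comp_self hb hSep.2.2.1)
    · exact hSep.2.2.1 hx
  have absorb' : ∀ x ∈ Comp G s S a, ∀ w ∈ s, G.Adj x w → w ∈ Comp G s S a ∪ S := by
    intro x hx w hw hadj
    by_cases hwS : w ∈ S
    · exact Set.mem_union_right _ hwS
    · exact Set.mem_union_left _ (comp_absorb hx hadj hw hwS)
  by_cases hcomp : ∀ p ∈ Comp G s S a ∪ S, ∀ q ∈ Comp G s S a ∪ S, p ≠ q → G.Adj p q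
  · refine ⟨a, haA, ?_⟩
    intro w hw z hz haw haz hwz
    exact hcomp w (absorb' a haA w hw haw) z (absorb' a haA z hz haz) hwz
  · push_neg at hcomp
    obtain ⟨p, hp, q, hq, hpq, hnadjpq⟩ := hcomp
    obtain ⟨x, hx, y, hy, hxy, hxynadj, hsx, hsy⟩ := IH _ hs's hbs' p q hp hq hpq hnadjpq
    have upg : ∀ z ∈ Comp G s S a, SimpIn G (Comp G s S a ∪ S) z → SimpIn G s z := by
      intro z hzA hz w hw t ht hzw hzt hwt
      exact hz w (absorb' z hzA w hw hzw) t (absorb' z hzA t ht hzt) hzw hzt hwt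
    rcases hx with hxA | hxS
    · exact ⟨x, hxA, upg x hxA hsx⟩
    · rcases hy with hyA | hyS
      · exact ⟨y, hyA, upg y hyA hsy⟩
      · exact absurd (sep_min_clique hch hSep hmin hxS hyS hxy) hxynadj

lemma dirac_aux [Fintype V]
    (hch : ∀ n : ℕ, 4 ≤ n → IsEmpty (SimpleGraph.cycleGraph n ↪g G)) :
    ∀ N : ℕ, ∀ s : Set V, s.ncard ≤ N → ∀ a b, a ∈ s → b ∈ s → a ≠ b → ¬G.Adj a b →
      ∃ x ∈ s, ∃ y ∈ s, x ≠ y ∧ ¬G.Adj x y ∧ SimpIn G s x ∧ SimpIn G s y := by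
  intro N
  induction N with
  | zero =>
    intro s hs a b ha _ _ _
    exfalso
    have h0 : s.ncard = 0 := by omega
    rw [Set.ncard_eq_zero s.toFinite] at h0
    rw [h0] at ha
    exact ha
  | succ N ih =>
    intro s hsN a b ha hb hab hnadj
    obtain ⟨S, hSep, hmin⟩ := exists_min_sep ha hb hab hnadj
    have IHgen : ∀ z ∈ s, ∀ t : Set V, t ⊆ s → z ∉ t →
        ∀ p q, p ∈ t → q ∈ t → p ≠ q → ¬G.Adj p q →
        ∃ x ∈ t, ∃ y ∈ t, x ≠ y ∧ ¬G.Adj x y ∧ SimpIn G t x ∧ SimpIn G t y := by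
      intro z hz t hts hzt p q hp hq hpq hpqn
      refine ih t ?_ p q hp hq hpq hpqn
      have hss : t ⊂ s := ⟨hts, fun h => hzt (h hz)⟩
      have := Set.ncard_lt_ncard hss s.toFinite
      omega
    obtain ⟨x, hxA, hx⟩ := claim_side hch ha hb hSep hmin (IHgen b hb)
    obtain ⟨y, hyB, hy⟩ := claim_side hch hb ha (sepSet_symm hSep)
      (fun T hT => hmin T (sepSet_symm hT)) (IHgen a ha)
    refine ⟨x, (comp_mem_s hxA).1, y, (comp_mem_s hyB).1, ?_, comp_nonadj hSep hxA hyB, hx, hy⟩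
    intro h
    exact comp_disjoint hSep (h ▸ hxA) hyB

variable (G)

section Alpha
variable [Fintype V]

lemma stabNum_bddAbove :
    BddAbove {n : ℕ | ∃ S : Finset V, IsStableSet G S ∧ S.card = n} := by
  refine ⟨Fintype.card V, ?_⟩
  rintro n ⟨S, -, rfl⟩
  exact Finset.card_le_univ S

lemma le_stabNum {S : Finset V} (h : IsStableSet G S) : S.card ≤ stabNum G :=
  le_csSup (stabNum_bddAbove G) ⟨S, h, rfl⟩

lemma exists_stab : ∃ S : Finset V, IsStableSet G S ∧ S.card = stabNum G := by
  have hne : {n : ℕ | ∃ S : Finset V, IsStableSet G S ∧ S.card = n}.Nonempty :=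
    ⟨0, ∅, fun u hu => absurd hu (by simp), rfl⟩
  exact Nat.sSup_mem hne (stabNum_bddAbove G)

lemma simp_in_core (hm : AlphaMinusStable G) {v : V} (hsimp : SimpIn G Set.univ v)
    {S : Finset V} (hS : IsStableSet G S) (hcard : S.card = stabNum G) : v ∈ S := by
  classical
  by_contra hv
  have hex : ∃ u ∈ S, G.Adj v u := by
    by_contra hno
    push_neg at hno
    have hstable : IsStableSet G (insert v S) := by
      intro x hx y hy hadj
      rcases Finset.mem_insert.mp hx with hx' | hx' <;>
        rcases Finset.mem_insert.mp hy with hy' | hy'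
      · rw [hx', hy'] at hadj; exact G.irrefl hadj
      · rw [hx'] at hadj; exact hno y hy' hadj
      · rw [hy'] at hadj; exact hno x hx' hadj.symm
      · exact hS x hx' y hy' hadj
    have := le_stabNum G hstable
    rw [Finset.card_insert_of_notMem hv] at this
    omega
  obtain ⟨u, huS, hadj⟩ := hex
  have huniq : ∀ w ∈ S, G.Adj v w → w = u := by
    intro w hw hadjw
    by_contra hne
    exact hS w hw u huS (hsimp w trivial u trivial hadjw hadj hne)
  have hstable' : IsStableSet (G.deleteEdges {s(v,u)}) (insert v S) := by
    intro x hx y hy hadj'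
    rw [SimpleGraph.deleteEdges_adj] at hadj'
    rcases Finset.mem_insert.mp hx with hx' | hx' <;>
      rcases Finset.mem_insert.mp hy with hy' | hy'
    · rw [hx', hy'] at hadj'; exact G.irrefl hadj'.1
    · by_cases hyu : y = u
      · rw [hx', hyu] at hadj'; exact hadj'.2 rfl
      · rw [hx'] at hadj'; exact hyu (huniq y hy' hadj'.1)
    · by_cases hxu : x = u
      · rw [hxu, hy'] at hadj'; exact hadj'.2 Sym2.eq_swap
      · rw [hy'] at hadj'; exact hxu (huniq x hx' hadj'.1.symm)
    · exact hS x hx' y hy' hadj'.1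
  have hle := le_stabNum _ hstable'
  rw [Finset.card_insert_of_notMem hv, hm v u hadj, ← hcard] at hle
  omega

lemma plus_no_two (hp : AlphaPlusStable G) {x y : V} (hxy : x ≠ y) (hnadj : ¬G.Adj x y)
    (hcore : ∀ S : Finset V, IsStableSet G S → S.card = stabNum G → x ∈ S ∧ y ∈ S) :
    False := by
  obtain ⟨T, hT, hTcard⟩ := exists_stab (G ⊔ SimpleGraph.fromEdgeSet {s(x,y)})
  have hTG : IsStableSet G T := fun u hu w hw hadj =>
    hT u hu w hw ((SimpleGraph.sup_adj _ _ _ _).mpr (Or.inl hadj))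
  have hTc : T.card = stabNum G := hTcard.trans (hp x y hxy hnadj)
  obtain ⟨hxT, hyT⟩ := hcore T hTG hTc
  refine hT x hxT y hyT ((SimpleGraph.sup_adj _ _ _ _).mpr (Or.inr ?_))
  rw [SimpleGraph.fromEdgeSet_adj]
  exact ⟨rfl, hxy⟩

lemma complete_not_minus (hm : AlphaMinusStable G) (h2 : 2 ≤ Fintype.card V)
    (hco : ∀ x y : V, x ≠ y → G.Adj x y) : False := by
  classical
  obtain ⟨u, v, huv⟩ := Fintype.exists_pair_of_one_lt_card (α := V) (by omega)
  have hadj := hco u v huv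
  have hstable : IsStableSet (G.deleteEdges {s(u,v)}) {u, v} := by
    intro x hx y hy hadj'
    rw [SimpleGraph.deleteEdges_adj] at hadj'
    have hx' : x = u ∨ x = v := by simpa using hx
    have hy' : y = u ∨ y = v := by simpa using hy
    rcases hx' with hx' | hx' <;> rcases hy' with hy' | hy' <;> rw [hx', hy'] at hadj'
    · exact G.irrefl hadj'.1
    · exact hadj'.2 rfl
    · exact hadj'.2 Sym2.eq_swap
    · exact G.irrefl hadj'.1
  have hle := le_stabNum _ hstable
  have hcard2 : ({u, v} : Finset V).card = 2 := by
    rw [Finset.card_insert_of_notMem (by simpa using huv), Finset.card_singleton]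
  rw [hcard2, hm u v hadj] at hle
  obtain ⟨S, hS, hcard⟩ := exists_stab G
  have h1 : 1 < S.card := by omega
  obtain ⟨x, hx, y, hy, hxy⟩ := Finset.one_lt_card.mp h1
  exact hS x hx y hy (hco x y hxy)

end Alpha

end S17

/-- There is no connected chordal graph with at least two
vertices which is α-stable. -/
theorem stmt17 {V : Type*} [Fintype V] (G : SimpleGraph V)
    (hc : G.Connected) (hch : IsChordal G) (h2 : 2 ≤ Fintype.card V) :
    ¬ (AlphaMinusStable G ∧ AlphaPlusStable G) := by
  rintro ⟨hm, hp⟩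
  classical
  by_cases hco : ∀ x y : V, x ≠ y → G.Adj x y
  · exact S17.complete_not_minus G hm h2 hco
  · push_neg at hco
    obtain ⟨a, b, hab, hnadj⟩ := hco
    obtain ⟨x, -, y, -, hxy, hxynadj, hsx, hsy⟩ :=
      S17.dirac_aux (G := G) (fun n hn => hch n hn) (Set.univ : Set V).ncard Set.univ le_rfl
        a b (Set.mem_univ a) (Set.mem_univ b) hab hnadj
    exact S17.plus_no_two G hp hxy hxynadj
      (fun S hS hc' => ⟨S17.simp_in_core G hm hsx hS hc', S17.simp_in_core G hm hsy hS hc'⟩)
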